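/- arXiv:math/0409493 — 3 statements merged into one kernel-verified Lean document; each statement's English description precedes it below -/
import Mathlib

section
/- Let K be a field with char K ≠ 2, λ ∈ K, and β, γ ≥ 1 natural numbers with n := β+γ+1 invertible in K. Set g(x) = x² − ((λ(β+1)+γ+1)/n)·x + λ/n, d = (λ(β+1)+γ+1)/(2n), and f(x) = x(x−1)^β(x−λ)^γ. If λ²(β+1)² − 2λ(β+γ+1−βγ) + (γ+1)² = 0, then g(x) = (x−d)², hence f′(x) = n·(x−1)^{β−1}(x−λ)^{γ−1}·(x−d)²; moreover, if in addition d ≠ 1 and d ≠ λ, then the third derivative of f does not vanish at d, i.e. f^{(3)}(d) ≠ 0. -/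
open Polynomial

private lemma third_deriv_eval_aux {K : Type*} [Field K] (c d : K) (u : K[X]) :
    eval d (derivative (derivative (C c * (u * (X - C d) ^ 2)))) = c * (2 * eval d u) := by
  simp only [derivative_mul, derivative_pow, derivative_X, derivative_sub, derivative_C,
    derivative_add, derivative_neg, derivative_C_mul, sub_zero, mul_one, Nat.add_sub_cancel]
  simp [eval_mul, eval_add, eval_sub, eval_pow, sub_self]
  left
  ring

/-- If the discriminant quantity `λ²(β+1)² − 2λ(β+γ+1−βγ) + (γ+1)²` vanishes, then the
quadratic factor `g` of `f′` is the square `(x−d)²`, so that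
`f′ = n (x−1)^{β−1} (x−λ)^{γ−1} (x−d)²`; moreover if `d ≠ 1` and `d ≠ λ` then
`f⁽³⁾(d) ≠ 0`. -/
theorem good_reduction_double_root {K : Type*} [Field K] (hchar : ringChar K ≠ 2)
    (lam : K) (β γ : ℕ) (hβ : 1 ≤ β) (hγ : 1 ≤ γ)
    (hn : ((β : K) + (γ : K) + 1) ≠ 0)
    (hdisc : lam ^ 2 * ((β : K) + 1) ^ 2 -
        2 * lam * ((β : K) + (γ : K) + 1 - (β : K) * (γ : K)) + ((γ : K) + 1) ^ 2 = 0) :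
    letI n : K := (β : K) + (γ : K) + 1
    letI d : K := (lam * ((β : K) + 1) + (γ : K) + 1) / (2 * n)
    letI g : K[X] := X ^ 2 - C ((lam * ((β : K) + 1) + (γ : K) + 1) / n) * X + C (lam / n)
    letI f : K[X] := X * (X - 1) ^ β * (X - C lam) ^ γ
    g = (X - C d) ^ 2 ∧
      derivative f = C n * ((X - 1) ^ (β - 1) * (X - C lam) ^ (γ - 1) * (X - C d) ^ 2) ∧
      (d ≠ 1 → d ≠ lam → (derivative (derivative (derivative f))).eval d ≠ 0) := by
  set n : K := (β : K) + (γ : K) + 1 with hn_def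
  set s : K := lam * ((β : K) + 1) + (γ : K) + 1 with hs_def
  set d : K := s / (2 * n) with hd_def
  have h2 : (2 : K) ≠ 0 := Ring.two_ne_zero hchar
  have h2n : (2 : K) * n ≠ 0 := mul_ne_zero h2 hn
  have hs2 : s ^ 2 = 4 * n * lam := by
    rw [hs_def, hn_def]; linear_combination hdisc
  have h2d : (2 : K) * d = s / n := by
    rw [hd_def]; field_simp
  have hdsq : d ^ 2 = lam / n := by
    rw [hd_def, div_pow, div_eq_div_iff (pow_ne_zero 2 h2n) hn]
    linear_combination n * hs2
  have part1 : (X ^ 2 - C (s / n) * X + C (lam / n) : K[X]) = (X - C d) ^ 2 := by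
    rw [← h2d, ← hdsq]
    simp only [map_mul, map_ofNat, map_pow]
    ring
  obtain ⟨A, rfl⟩ : ∃ A, β = A + 1 := ⟨β - 1, (Nat.succ_pred_eq_of_pos hβ).symm⟩
  obtain ⟨B, rfl⟩ : ∃ B, γ = B + 1 := ⟨γ - 1, (Nat.succ_pred_eq_of_pos hγ).symm⟩
  simp only [Nat.add_sub_cancel]
  have hq : C n * (X ^ 2 - C (s / n) * X + C (lam / n)) =
      C n * X ^ 2 - C s * X + C lam := by
    have e1 : C n * C (s / n) = C s := by rw [← C_mul, mul_div_cancel₀ _ hn]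
    have e2 : C n * C (lam / n) = C lam := by rw [← C_mul, mul_div_cancel₀ _ hn]
    linear_combination (-(X : K[X])) * e1 + e2
  have key : derivative ((X : K[X]) * (X - 1) ^ (A + 1) * (X - C lam) ^ (B + 1)) =
      (X - 1) ^ A * (X - C lam) ^ B * (C n * X ^ 2 - C s * X + C lam) := by
    rw [hn_def, hs_def]
    push_cast
    simp only [derivative_mul, derivative_pow, derivative_X, derivative_sub, derivative_one,
      derivative_C, Nat.add_sub_cancel, Nat.cast_add, Nat.cast_one, C_add, C_1, C_mul,
      map_ofNat, sub_zero, mul_one]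
    ring
  have part2 : derivative ((X : K[X]) * (X - 1) ^ (A + 1) * (X - C lam) ^ (B + 1)) =
      C n * ((X - 1) ^ A * (X - C lam) ^ B * (X - C d) ^ 2) := by
    rw [key, ← part1]
    linear_combination (-(((X : K[X]) - 1) ^ A * ((X : K[X]) - C lam) ^ B)) * hq
  refine ⟨part1, part2, ?_⟩
  intro hd1 hdl
  rw [part2, third_deriv_eval_aux n d ((X - 1) ^ A * (X - C lam) ^ B)]
  simp only [eval_mul, eval_pow, eval_sub, eval_X, eval_C, eval_one]
  exact mul_ne_zero hn (mul_ne_zero h2 (mul_ne_zero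
    (pow_ne_zero _ (sub_ne_zero.mpr hd1)) (pow_ne_zero _ (sub_ne_zero.mpr hdl))))
end

section
/- Let k be a commutative ring of characteristic p, where p is a prime, and let β be an integer with 1 ≤ β ≤ p−1. Then in the polynomial ring k[x, ε] in two variables, the polynomial x·(x−ε)^{p−1}·(x−1)^{p−β}·(x−1+ε)^β − (x(x−1))^p − ε·x^{p−1}·(x−1)^{p−1}·((β+1)x − 1) is divisible by ε². -/
open MvPolynomial

/-- First-order binomial approximation: `(a+b)^(n+1) ≡ a^(n+1) + (n+1) a^n b (mod b²)`. -/
lemma pow_add_approx {R : Type*} [CommRing R] (n : ℕ) (a b : R) :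
    ∃ c, (a + b) ^ (n + 1) = a ^ (n + 1) + ((n : R) + 1) * a ^ n * b + b ^ 2 * c := by
  induction n with
  | zero => exact ⟨0, by ring⟩
  | succ n ih =>
    obtain ⟨c, hc⟩ := ih
    refine ⟨a * c + ((n : R) + 1) * a ^ n + b * c, ?_⟩
    rw [pow_succ, hc]
    push_cast
    ring

/-- In characteristic `p`, the polynomial
`x (x−ε)^{p−1} (x−1)^{p−β} (x−1+ε)^β − (x(x−1))^p − ε x^{p−1} (x−1)^{p−1} ((β+1)x − 1)`
is divisible by `ε²` in `k[x, ε]`. Here `x = X 0` and `ε = X 1`. -/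
theorem F_minus_hp_mod_eps_sq {k : Type*} [CommRing k] (p : ℕ) (hp : p.Prime)
    [CharP k p] (β : ℕ) (hβ1 : 1 ≤ β) (hβ2 : β ≤ p - 1) :
    (X 1 : MvPolynomial (Fin 2) k) ^ 2 ∣
      X 0 * (X 0 - X 1) ^ (p - 1) * (X 0 - 1) ^ (p - β) * (X 0 - 1 + X 1) ^ β -
        (X 0 * (X 0 - 1)) ^ p -
        X 1 * X 0 ^ (p - 1) * (X 0 - 1) ^ (p - 1) *
          (((β : MvPolynomial (Fin 2) k) + 1) * X 0 - 1) := by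
  obtain ⟨b, rfl⟩ : ∃ b, β = b + 1 := ⟨β - 1, by omega⟩
  have hp2 := hp.two_le
  obtain ⟨g, rfl⟩ : ∃ g, p = g + b + 2 := ⟨p - b - 2, by omega⟩
  set R := MvPolynomial (Fin 2) k
  have h1 : g + b + 2 - 1 = g + b + 1 := by omega
  have h2 : g + b + 2 - (b + 1) = g + 1 := by omega
  rw [h1, h2, sub_eq_add_neg (X 0 : R) (X 1)]
  obtain ⟨c1, hc1⟩ := pow_add_approx (g + b) (X 0 : R) (-(X 1))
  obtain ⟨c2, hc2⟩ := pow_add_approx b ((X 0 : R) - 1) (X 1)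
  rw [hc1, hc2, mul_pow]
  have hch : ((g + b + 2 : ℕ) : R) = 0 := by
    have h := CharP.cast_eq_zero k (g + b + 2)
    have : ((g + b + 2 : ℕ) : R) = C ((g + b + 2 : ℕ) : k) := by
      simp
    rw [this, h, map_zero]
  push_cast at hch
  refine ⟨X 0 * (X 0 - 1) ^ (g + 1) *
      (X 0 ^ (g + b + 1) * c2
        - ((g : R) + (b : R) + 1) * X 0 ^ (g + b) * (((b : R) + 1) * (X 0 - 1) ^ b)
        + c1 * (X 0 - 1) ^ (b + 1)
        + X 1 * (c1 * (((b : R) + 1) * (X 0 - 1) ^ b)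
            - ((g : R) + (b : R) + 1) * X 0 ^ (g + b) * c2)
        + X 1 ^ 2 * c1 * c2), ?_⟩
  push_cast
  linear_combination (X 1 * X 0 ^ (g + b + 1) * ((X 0 : R) - 1) ^ (g + b + 1) * (1 - X 0)) * hch
end

section
/- Let p be an odd positive integer, K a field with char K ≠ 2, and c₁, c₂ ∈ K with c₁ ≠ 0, c₂ ≠ 0, c₁ ≠ c₂ and c₁ + c₂ ≠ 0. Set λ = −(c₁−c₂)²/(4c₁c₂) and let φ = ((c₁−c₂)/(2c₁))·(X+c₁)/(X−c₂) in the rational function field K(X). Then in K(X): φ·(φ−1)^{p−1}·(φ−λ) = −λ·( (c₁+c₂) / (2c₁(X−c₂)²) )^p · (X−c₁)^{p−1}·(X+c₁)·(X−c₂)^{p−1}·(X+c₂). -/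
set_option maxHeartbeats 1000000 in
/-- The coordinate change of Proposition 4.1: with `λ = −(c₁−c₂)²/(4c₁c₂)` and
`φ = ((c₁−c₂)/(2c₁))(X+c₁)/(X−c₂)`, one has
`φ(φ−1)^{p−1}(φ−λ) = −λ ((c₁+c₂)/(2c₁(X−c₂)²))^p (X−c₁)^{p−1}(X+c₁)(X−c₂)^{p−1}(X+c₂)`
in `K(X)`. -/
theorem coordinate_change_cover {K : Type*} [Field K] (hchar : ringChar K ≠ 2)
    (p : ℕ) (hodd : Odd p) (hppos : 0 < p)
    (c₁ c₂ : K) (hc₁ : c₁ ≠ 0) (hc₂ : c₂ ≠ 0) (hne : c₁ ≠ c₂) (hsum : c₁ + c₂ ≠ 0) :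
    letI lam : K := -(c₁ - c₂) ^ 2 / (4 * c₁ * c₂)
    letI φ : RatFunc K :=
      RatFunc.C ((c₁ - c₂) / (2 * c₁)) * (RatFunc.X + RatFunc.C c₁) /
        (RatFunc.X - RatFunc.C c₂)
    φ * (φ - 1) ^ (p - 1) * (φ - RatFunc.C lam) =
      RatFunc.C (-lam) *
        (RatFunc.C (c₁ + c₂) /
          (RatFunc.C (2 * c₁) * (RatFunc.X - RatFunc.C c₂) ^ 2)) ^ p *
        ((RatFunc.X - RatFunc.C c₁) ^ (p - 1) * (RatFunc.X + RatFunc.C c₁) *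
          (RatFunc.X - RatFunc.C c₂) ^ (p - 1) * (RatFunc.X + RatFunc.C c₂)) := by
  obtain ⟨m, hm⟩ := hodd
  subst hm
  have h2 : (2 : K) ≠ 0 := by
    simpa using Ring.two_ne_zero (by simpa [ringChar.spec] using hchar)
  have h4 : (4 : K) ≠ 0 := by
    have : (4 : K) = 2 * 2 := by norm_num
    rw [this]; exact mul_ne_zero h2 h2
  -- abbreviations
  set a : K := (c₁ - c₂) / (2 * c₁) with ha
  set lam : K := -(c₁ - c₂) ^ 2 / (4 * c₁ * c₂) with hlam
  set b : K := -(c₁ + c₂) / (2 * c₁) with hb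
  set d : K := (c₁ - c₂) * (c₁ + c₂) / (4 * c₁ * c₂) with hd
  set u : RatFunc K := RatFunc.X - RatFunc.C c₂ with hu
  have hX : u ≠ 0 := by
    have : u = algebraMap (Polynomial K) _ (Polynomial.X - Polynomial.C c₂) := by
      simp [hu, RatFunc.algebraMap_X, RatFunc.algebraMap_C]
    rw [this]
    exact RatFunc.algebraMap_ne_zero (Polynomial.X_sub_C_ne_zero c₂)
  -- factorization of φ - 1
  have h1 : RatFunc.C a * (RatFunc.X + RatFunc.C c₁) / u - 1
      = RatFunc.C b * (RatFunc.X - RatFunc.C c₁) / u := by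
    rw [div_sub_one hX]
    congr 1
    have e1 : a - 1 = b := by rw [ha, hb]; field_simp; ring
    have e2 : a * c₁ + c₂ = -(b * c₁) := by rw [ha, hb]; field_simp; ring
    have E1 : (RatFunc.C a : RatFunc K) - 1 = RatFunc.C b := by
      rw [← map_one (RatFunc.C (K := K)), ← map_sub, e1]
    have E2 : (RatFunc.C a) * RatFunc.C c₁ + RatFunc.C c₂
        = -(RatFunc.C b * RatFunc.C c₁) := by
      rw [← map_mul, ← map_mul, ← map_add, ← map_neg, e2]
    rw [hu]
    linear_combination RatFunc.X * E1 + E2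
  -- factorization of φ - lam
  have h2' : RatFunc.C a * (RatFunc.X + RatFunc.C c₁) / u - RatFunc.C lam
      = RatFunc.C d * (RatFunc.X + RatFunc.C c₂) / u := by
    rw [div_sub' hX]
    congr 1
    have e1 : a - lam = d := by rw [ha, hlam, hd]; field_simp; ring
    have e2 : a * c₁ + lam * c₂ = d * c₂ := by rw [ha, hlam, hd]; field_simp; ring
    have E1 : (RatFunc.C a : RatFunc K) - RatFunc.C lam = RatFunc.C d := by
      rw [← map_sub, e1]
    have E2 : RatFunc.C a * RatFunc.C c₁ + RatFunc.C lam * RatFunc.C c₂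
        = RatFunc.C d * RatFunc.C c₂ := by
      rw [← map_mul, ← map_mul, ← map_mul, ← map_add, e2]
    rw [hu]
    linear_combination RatFunc.X * E1 + E2
  -- the key scalar identity
  have hkey : a * b ^ (2 * m) * d * (2 * c₁) ^ (2 * m + 1)
      = -lam * (c₁ + c₂) ^ (2 * m + 1) := by
    rw [ha, hb, hd, hlam, neg_div, Even.neg_pow (even_two_mul m), div_pow]
    field_simp
    ring
  -- assemble
  simp only [Nat.add_sub_cancel]
  rw [h1, h2']
  have hden1 : u ^ (2 * m + 2) ≠ 0 := pow_ne_zero _ hX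
  have hden2 : (RatFunc.C (2 * c₁) * u ^ 2) ^ (2 * m + 1) ≠ 0 := by
    apply pow_ne_zero
    apply mul_ne_zero _ (pow_ne_zero _ hX)
    intro h
    exact (mul_ne_zero h2 hc₁) ((RatFunc.C (K := K)).injective (by simp [h]))
  calc
    RatFunc.C a * (RatFunc.X + RatFunc.C c₁) / u *
        (RatFunc.C b * (RatFunc.X - RatFunc.C c₁) / u) ^ (2 * m) *
        (RatFunc.C d * (RatFunc.X + RatFunc.C c₂) / u)
        = (RatFunc.C a * (RatFunc.X + RatFunc.C c₁) *
            (RatFunc.C b * (RatFunc.X - RatFunc.C c₁)) ^ (2 * m) *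
            (RatFunc.C d * (RatFunc.X + RatFunc.C c₂))) / u ^ (2 * m + 2) := by
          rw [div_pow, div_mul_div_comm, div_mul_div_comm]
          congr 1
          ring
    _ = (RatFunc.C (-lam) * RatFunc.C (c₁ + c₂) ^ (2 * m + 1) *
          ((RatFunc.X - RatFunc.C c₁) ^ (2 * m) * (RatFunc.X + RatFunc.C c₁) *
            u ^ (2 * m) * (RatFunc.X + RatFunc.C c₂))) /
          (RatFunc.C (2 * c₁) * u ^ 2) ^ (2 * m + 1) := by
          rw [div_eq_div_iff hden1 hden2]
          calc
            RatFunc.C a * (RatFunc.X + RatFunc.C c₁) *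
                (RatFunc.C b * (RatFunc.X - RatFunc.C c₁)) ^ (2 * m) *
                (RatFunc.C d * (RatFunc.X + RatFunc.C c₂)) *
                (RatFunc.C (2 * c₁) * u ^ 2) ^ (2 * m + 1)
                = RatFunc.C (a * b ^ (2 * m) * d * (2 * c₁) ^ (2 * m + 1)) *
                  ((RatFunc.X + RatFunc.C c₁) * (RatFunc.X - RatFunc.C c₁) ^ (2 * m) *
                    (RatFunc.X + RatFunc.C c₂) * u ^ (4 * m + 2)) := by
                simp only [map_mul, map_pow, mul_pow, ← pow_mul]
                ring
            _ = RatFunc.C (-lam * (c₁ + c₂) ^ (2 * m + 1)) *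
                  ((RatFunc.X + RatFunc.C c₁) * (RatFunc.X - RatFunc.C c₁) ^ (2 * m) *
                    (RatFunc.X + RatFunc.C c₂) * u ^ (4 * m + 2)) := by rw [hkey]
            _ = RatFunc.C (-lam) * RatFunc.C (c₁ + c₂) ^ (2 * m + 1) *
                  ((RatFunc.X - RatFunc.C c₁) ^ (2 * m) * (RatFunc.X + RatFunc.C c₁) *
                    u ^ (2 * m) * (RatFunc.X + RatFunc.C c₂)) * u ^ (2 * m + 2) := by
                simp only [map_mul, map_pow, mul_pow, ← pow_mul]
                ring
    _ = RatFunc.C (-lam) *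
          (RatFunc.C (c₁ + c₂) / (RatFunc.C (2 * c₁) * u ^ 2)) ^ (2 * m + 1) *
          ((RatFunc.X - RatFunc.C c₁) ^ (2 * m) * (RatFunc.X + RatFunc.C c₁) *
            u ^ (2 * m) * (RatFunc.X + RatFunc.C c₂)) := by
          rw [div_pow]
          ring
end
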